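/- arXiv:2602.08032 — 3 statements merged into one kernel-verified Lean document; each statement's English description precedes it below -/
import Mathlib

section
/- For every probability vector p ∈ Δ^{N−1} and every permutation σ of {1,…,N}, the random action a(p, ω), with ω drawn from the uniform probability measure on [0,1)^{N−1}, is distributed according to p; that is, for every action k ∈ {1,…,N}, the probability of the event {ω : a(p, ω) = k} equals p_k. -/
open MeasureTheory Finset

noncomputable section

/-- Tail sum `S_i(p) = ∑_{j=i}^{N} p_{σ(j)}`, with `N = n+1` and indices as `Fin (n+1)`. -/
def tailSum {n : ℕ} (σ : Equiv.Perm (Fin (n + 1))) (p : Fin (n + 1) → ℝ)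
    (i : Fin (n + 1)) : ℝ :=
  ∑ j ∈ Finset.Ici i, p (σ j)

/-- Threshold `α_i(p) = p_{σ(i)} / S_i(p)` if `S_i(p) > 0`, else `p_{σ(i)}`. -/
def threshold {n : ℕ} (σ : Equiv.Perm (Fin (n + 1))) (p : Fin (n + 1) → ℝ)
    (i : Fin (n + 1)) : ℝ :=
  if 0 < tailSum σ p i then p (σ i) / tailSum σ p i else p (σ i)

open Classical in
/-- The action `a(p, ω)`: `σ(i)` for the smallest index `i` (among the first `n = N - 1`
indices) with `ω_i < α_i(p)`, and `σ(N)` if no such index exists. -/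
def act {n : ℕ} (σ : Equiv.Perm (Fin (n + 1))) (p : Fin (n + 1) → ℝ)
    (ω : Fin n → ℝ) : Fin (n + 1) :=
  match Fin.find? (fun i : Fin n => decide (ω i < threshold σ p i.castSucc)) with
  | some i => σ i.castSucc
  | none => σ (Fin.last n)

/-- The uniform (product Lebesgue) probability measure on `[0,1)^n`. -/
def unif (n : ℕ) : Measure (Fin n → ℝ) :=
  Measure.pi fun _ => volume.restrict (Set.Ico (0 : ℝ) 1)

/-!
Call the event that every index before `i` is rejected, `α_j ≤ ω_j` for `j < i`, the survival
box of `i`. It is a box in `[0,1)^{N-1}` of volume `∏_{j<i} (1 - α_j)`, and this product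
telescopes to the tail sum `S_i` because `(1 - α_j) S_j = S_j - p_{σ(j)} = S_{j+1}`. The action
is `σ(i)` exactly on the survival box of `i` minus that of `i + 1` (for `i = N`, on the whole
survival box of `N`), so its probability is `S_i - S_{i+1} = p_{σ(i)}`, resp. `S_N = p_{σ(N)}`.
-/

namespace ActSampling

variable {n : ℕ} (σ : Equiv.Perm (Fin (n + 1))) {p : Fin (n + 1) → ℝ}

theorem tailSum_nonneg (hp : ∀ k, 0 ≤ p k) (i : Fin (n + 1)) : 0 ≤ tailSum σ p i :=
  sum_nonneg fun j _ => hp (σ j)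

theorem self_le_tailSum (hp : ∀ k, 0 ≤ p k) (i : Fin (n + 1)) : p (σ i) ≤ tailSum σ p i :=
  single_le_sum (fun j _ => hp (σ j)) (mem_Ici.mpr le_rfl)

theorem tailSum_zero (hsum : ∑ k, p k = 1) : tailSum σ p 0 = 1 := by
  simp [tailSum, Equiv.sum_comp σ p, hsum]

theorem tailSum_last : tailSum σ p (Fin.last n) = p (σ (Fin.last n)) := by
  have : Ici (Fin.last n) = {Fin.last n} := by
    ext; simp [Fin.last_le_iff]
  rw [tailSum, this, sum_singleton]

theorem tailSum_castSucc (i : Fin n) :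
    tailSum σ p i.castSucc = p (σ i.castSucc) + tailSum σ p i.succ := by
  have : Ioi i.castSucc = Ici i.succ := by
    ext; simp [Fin.castSucc_lt_iff_succ_le]
  rw [tailSum, ← add_sum_Ioi_eq_sum_Ici, this, tailSum]

theorem threshold_nonneg (hp : ∀ k, 0 ≤ p k) (i : Fin (n + 1)) : 0 ≤ threshold σ p i := by
  unfold threshold
  split_ifs with h
  exacts [div_nonneg (hp _) h.le, hp _]

theorem threshold_le_one (hp : ∀ k, 0 ≤ p k) (i : Fin (n + 1)) : threshold σ p i ≤ 1 := by
  unfold threshold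
  split_ifs with h
  · exact div_le_one_of_le₀ (self_le_tailSum σ hp i) h.le
  · linarith [self_le_tailSum σ hp i]

theorem threshold_mul_tailSum (hp : ∀ k, 0 ≤ p k) (i : Fin (n + 1)) :
    threshold σ p i * tailSum σ p i = p (σ i) := by
  unfold threshold
  split_ifs with h
  · exact div_mul_cancel₀ _ h.ne'
  · have hS : tailSum σ p i = 0 := le_antisymm (not_lt.mp h) (tailSum_nonneg σ hp i)
    have hpi : p (σ i) = 0 := le_antisymm (hS ▸ self_le_tailSum σ hp i) (hp _)
    rw [hS, hpi, mul_zero]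

theorem prod_one_sub_threshold (hp : ∀ k, 0 ≤ p k) (hsum : ∑ k, p k = 1) (i : Fin (n + 1)) :
    ∏ j : Fin n with j.castSucc < i, (1 - threshold σ p j.castSucc) = tailSum σ p i := by
  induction i using Fin.induction with
  | zero => simp [tailSum_zero σ hsum]
  | succ i ih =>
    have hIic : ({j : Fin n | j.castSucc < i.succ} : Finset (Fin n)) = Iic i := by
      ext; simp [Fin.castSucc_lt_succ_iff]
    have hIio : ({j : Fin n | j.castSucc < i.castSucc} : Finset (Fin n)) = Iio i := by
      ext; simp
    rw [hIic, ← mul_prod_Iio_eq_prod_Iic, ← hIio, ih, sub_mul, one_mul,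
      threshold_mul_tailSum σ hp, tailSum_castSucc]
    ring

def survivalBox (p : Fin (n + 1) → ℝ) (i : Fin (n + 1)) : Set (Fin n → ℝ) :=
  Set.univ.pi fun j => if j.castSucc < i then Set.Ici (threshold σ p j.castSucc) else Set.univ

theorem measurableSet_survivalBox (i : Fin (n + 1)) : MeasurableSet (survivalBox σ p i) :=
  .univ_pi fun j => by split_ifs <;> measurability

theorem le_symm_act_iff (i : Fin (n + 1)) (ω : Fin n → ℝ) :
    i ≤ σ.symm (act σ p ω) ↔ ω ∈ survivalBox σ p i := by
  simp only [survivalBox, Set.mem_univ_pi, Set.mem_ite_univ_right, Set.mem_Ici]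
  unfold act
  split
  case h_1 m hm =>
    simp only [Fin.find?_eq_some_iff, decide_eq_true_eq, decide_eq_false_iff_not, not_lt] at hm
    rw [Equiv.symm_apply_apply]
    refine ⟨fun hi j hj => hm.2 j (Fin.castSucc_lt_castSucc_iff.mp (hj.trans_le hi)), fun h => ?_⟩
    by_contra! hlt
    exact (h m hlt).not_gt hm.1
  case h_2 hnone =>
    simp only [Fin.find?_eq_none_iff, decide_eq_false_iff_not, not_lt] at hnone
    simp [Fin.le_last, hnone]

theorem survivalBox_antitone : Antitone (survivalBox σ p) := fun i j hij ω hω =>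
  (le_symm_act_iff σ i ω).mp (hij.trans ((le_symm_act_iff σ j ω).mpr hω))

theorem setOf_symm_act_eq_last :
    {ω | σ.symm (act σ p ω) = Fin.last n} = survivalBox σ p (Fin.last n) := by
  ext ω
  rw [Set.mem_ofPred_eq, ← le_symm_act_iff, Fin.last_le_iff]

theorem setOf_symm_act_eq_castSucc (m : Fin n) :
    {ω | σ.symm (act σ p ω) = m.castSucc}
      = survivalBox σ p m.castSucc \ survivalBox σ p m.succ := by
  ext ω
  rw [Set.mem_ofPred_eq, Set.mem_sdiff, ← le_symm_act_iff, ← le_symm_act_iff,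
    ← Fin.castSucc_lt_iff_succ_le, not_lt, ← le_antisymm_iff, eq_comm]

theorem volume_restrict_Ico_Ici {a : ℝ} (ha : 0 ≤ a) :
    volume.restrict (Set.Ico (0 : ℝ) 1) (Set.Ici a) = ENNReal.ofReal (1 - a) := by
  rw [Measure.restrict_apply measurableSet_Ici, ← Set.Ici_inter_Iio, ← Set.inter_assoc,
    Set.Ici_inter_Ici, sup_of_le_left ha, Set.Ici_inter_Iio, Real.volume_Ico]

theorem unif_survivalBox (hp : ∀ k, 0 ≤ p k) (hsum : ∑ k, p k = 1) (i : Fin (n + 1)) :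
    unif n (survivalBox σ p i) = ENNReal.ofReal (tailSum σ p i) := by
  have hfactor (j : Fin n) : 0 ≤ 1 - threshold σ p j.castSucc :=
    sub_nonneg.mpr (threshold_le_one σ hp _)
  rw [unif, survivalBox, Measure.pi_pi, ← prod_one_sub_threshold σ hp hsum, prod_filter,
    ENNReal.ofReal_prod_of_nonneg fun j _ => by split_ifs <;> simp [hfactor]]
  refine prod_congr rfl fun j _ => ?_
  split_ifs
  · exact volume_restrict_Ico_Ici (threshold_nonneg σ hp _)
  · simp [Real.volume_Ico]

end ActSampling

open ActSampling

/-- For every probability vector `p` and permutation `σ`, the random action `a(p, ω)` with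
`ω` uniform on `[0,1)^{N-1}` is distributed according to `p`: for every action `k`,
the probability of `{ω : a(p, ω) = k}` equals `p k`. -/
theorem action_sampling_distributed (n : ℕ) (σ : Equiv.Perm (Fin (n + 1)))
    (p : Fin (n + 1) → ℝ) (hp : ∀ k, 0 ≤ p k) (hsum : ∑ k, p k = 1)
    (k : Fin (n + 1)) :
    unif n {ω | act σ p ω = k} = ENNReal.ofReal (p k) := by
  obtain ⟨i, rfl⟩ := σ.surjective k
  have hevent : {ω | act σ p ω = σ i} = {ω | σ.symm (act σ p ω) = i} := by
    ext; exact σ.symm_apply_eq.symm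
  rw [hevent]
  induction i using Fin.lastCases with
  | last => rw [setOf_symm_act_eq_last, unif_survivalBox σ hp hsum, tailSum_last]
  | cast m =>
    have hsub : survivalBox σ p m.succ ⊆ survivalBox σ p m.castSucc :=
      survivalBox_antitone σ Fin.castSucc_lt_succ.le
    rw [setOf_symm_act_eq_castSucc,
      measure_sdiff hsub (measurableSet_survivalBox σ _).nullMeasurableSet
        (by simp [unif_survivalBox σ hp hsum]),
      unif_survivalBox σ hp hsum, unif_survivalBox σ hp hsum,
      ← ENNReal.ofReal_sub _ (tailSum_nonneg σ hp _), tailSum_castSucc, add_sub_cancel_right]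
end
end

section
/- For any two probability vectors p, q ∈ Δ^{N−1} and any permutation σ of {1,…,N}, the probability of disagreement is bounded above by the ℓ1 distance between the threshold vectors: Pr_{ω}( a(p, ω) ≠ a(q, ω) ) ≤ Σ_{i=1}^{N−1} |α_i(p) − α_i(q)|, where both actions are computed from the same uniform sample ω on [0,1)^{N−1} and the same permutation σ. -/
/-!
Both actions read the same coordinates `ω i` and only compare each with a threshold, so they can
differ only if some `ω i` separates `α_i(p)` from `α_i(q)`, i.e. lies in
`[min (α_i p) (α_i q), max (α_i p) (α_i q))`. Each coordinate is uniform on `[0,1)`, so this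
event has probability at most `|α_i(p) - α_i(q)|`; a union bound over `i` finishes.
-/

open MeasureTheory Finset

noncomputable section

theorem lt_iff_lt_of_notMem_Ico_min_max {α : Type*} [LinearOrder α] {x a b : α}
    (h : x ∉ Set.Ico (min a b) (max a b)) : x < a ↔ x < b := by
  rw [Set.mem_Ico, not_and_or, not_le, not_lt, lt_min_iff, max_le_iff] at h
  rcases h with ⟨ha, hb⟩ | ⟨ha, hb⟩
  · exact iff_of_true ha hb
  · exact iff_of_false ha.not_gt hb.not_gt

theorem act_eq_act_of_forall_lt_threshold_iff {n : ℕ} (σ : Equiv.Perm (Fin (n + 1)))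
    {p q : Fin (n + 1) → ℝ} {ω : Fin n → ℝ}
    (h : ∀ i : Fin n, ω i < threshold σ p i.castSucc ↔ ω i < threshold σ q i.castSucc) :
    act σ p ω = act σ q ω := by
  simp only [act, h]

theorem disagreement_subset_iUnion_between_thresholds {n : ℕ} (σ : Equiv.Perm (Fin (n + 1)))
    (p q : Fin (n + 1) → ℝ) :
    {ω | act σ p ω ≠ act σ q ω} ⊆ ⋃ i : Fin n, Function.eval i ⁻¹'
      Set.Ico (min (threshold σ p i.castSucc) (threshold σ q i.castSucc))
        (max (threshold σ p i.castSucc) (threshold σ q i.castSucc)) := by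
  intro ω hω
  by_contra hω'
  simp only [Set.mem_iUnion, Set.mem_preimage, Function.eval, not_exists] at hω'
  exact hω <|
    act_eq_act_of_forall_lt_threshold_iff σ fun i => lt_iff_lt_of_notMem_Ico_min_max (hω' i)

theorem unif_preimage_eval_Ico_le {n : ℕ} (i : Fin n) (a b : ℝ) :
    unif n (Function.eval i ⁻¹' Set.Ico a b) ≤ ENNReal.ofReal (b - a) := by
  have : IsProbabilityMeasure (volume.restrict (Set.Ico (0 : ℝ) 1)) := ⟨by simp⟩
  rw [unif, (measurePreserving_eval _ i).measure_preimage measurableSet_Ico.nullMeasurableSet,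
    ← Real.volume_Ico]
  exact Measure.restrict_apply_le _ _

theorem disagreement_prob_le_threshold_l1_general (n : ℕ) (σ : Equiv.Perm (Fin (n + 1)))
    (p q : Fin (n + 1) → ℝ) :
    unif n {ω | act σ p ω ≠ act σ q ω} ≤
      ENNReal.ofReal
        (∑ i : Fin n, |threshold σ p i.castSucc - threshold σ q i.castSucc|) := by
  rw [ENNReal.ofReal_sum_of_nonneg fun i _ => abs_nonneg _]
  calc unif n {ω | act σ p ω ≠ act σ q ω}
      ≤ ∑ i : Fin n, unif n (Function.eval i ⁻¹'
          Set.Ico (min (threshold σ p i.castSucc) (threshold σ q i.castSucc))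
            (max (threshold σ p i.castSucc) (threshold σ q i.castSucc))) :=
        (measure_mono (disagreement_subset_iUnion_between_thresholds σ p q)).trans
          (measure_iUnion_fintype_le _ _)
    _ ≤ _ := Finset.sum_le_sum fun i _ => (unif_preimage_eval_Ico_le i _ _).trans_eq <| by
        rw [max_sub_min_eq_abs, abs_sub_comm]

/-- The probability of disagreement is bounded above by the ℓ1 distance between the
threshold vectors: `Pr(a(p,ω) ≠ a(q,ω)) ≤ ∑_{i=1}^{N-1} |α_i(p) − α_i(q)|`. -/
theorem disagreement_prob_le_threshold_l1 (n : ℕ) (σ : Equiv.Perm (Fin (n + 1)))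
    (p q : Fin (n + 1) → ℝ)
    (hp : ∀ k, 0 ≤ p k) (hpsum : ∑ k, p k = 1)
    (hq : ∀ k, 0 ≤ q k) (hqsum : ∑ k, q k = 1) :
    unif n {ω | act σ p ω ≠ act σ q ω} ≤
      ENNReal.ofReal
        (∑ i : Fin n, |threshold σ p i.castSucc - threshold σ q i.castSucc|) :=
  disagreement_prob_le_threshold_l1_general n σ p q
end
end

section
/- For any two probability vectors p, q ∈ Δ^{N−1} and any permutation σ of {1,…,N}, the probability of disagreement admits the exact formula Pr_{ω}( a(p, ω) ≠ a(q, ω) ) = Σ_{i=1}^{N−1} (u_i − l_i) · Π_{j=1}^{i−1} (1 − u_j), where u_i = max(α_i(p), α_i(q)) and l_i = min(α_i(p), α_i(q)), and both actions are computed from the same uniform sample ω on [0,1)^{N−1} and the same permutation σ. -/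
open MeasureTheory Finset

noncomputable section

/-!
Both actions read the same coordinates `ω_1, ω_2, …` in order and stop at the first `i` with
`ω_i` below their own threshold. They disagree exactly when, at the first index where either of
them stops, only one does: `ω_j ≥ u_j` for every `j < i` and `l_i ≤ ω_i < u_i`. For distinct `i`
these events are disjoint boxes in `[0,1)^{N-1}`, of volume `(u_i - l_i) ∏_{j<i} (1 - u_j)`.
-/

theorem Fin.find?_ne_find?_iff {n : ℕ} {P Q : Fin n → Bool} :
    Fin.find? P ≠ Fin.find? Q ↔ ∃ i, (∀ j < i, P j = false ∧ Q j = false) ∧ P i ≠ Q i := by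
  constructor
  · intro hne
    obtain ⟨m, hm⟩ : ∃ m, Fin.find? (fun i => P i || Q i) = some m := by
      refine Option.isSome_iff_exists.1 (Fin.isSome_find?_iff.2 ?_)
      by_contra! h
      simp only [ne_eq, Bool.or_eq_true, not_or, Bool.not_eq_true] at h
      exact hne (by rw [Fin.find?_eq_none_iff.2 fun i => (h i).1,
        Fin.find?_eq_none_iff.2 fun i => (h i).2])
    rw [Fin.find?_eq_some_iff] at hm
    simp only [Bool.or_eq_true, Bool.or_eq_false_iff] at hm
    refine ⟨m, hm.2, fun hPQ => hne ?_⟩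
    have hboth : P m ∧ Q m := by grind
    rw [Fin.find?_eq_some_iff.2 ⟨hboth.1, fun j hj => (hm.2 j hj).1⟩,
      Fin.find?_eq_some_iff.2 ⟨hboth.2, fun j hj => (hm.2 j hj).2⟩]
  · rintro ⟨i, hlt, hi⟩ heq
    cases hP : P i <;> cases hQ : Q i <;> simp only [hP, hQ, ne_eq, not_true_eq_false] at hi
    · have := Fin.find?_eq_some_iff.2 ⟨hQ, fun j hj => (hlt j hj).2⟩
      rw [← heq, Fin.find?_eq_some_iff] at this
      simp [hP] at this
    · have := Fin.find?_eq_some_iff.2 ⟨hP, fun j hj => (hlt j hj).1⟩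
      rw [heq, Fin.find?_eq_some_iff] at this
      simp [hQ] at this

theorem not_lt_iff_lt_iff_mem_Ico {α : Type*} [LinearOrder α] {a b x : α} :
    ¬(x < a ↔ x < b) ↔ x ∈ Set.Ico (min a b) (max a b) := by
  rcases le_total a b with h | h <;> simp [h] <;> grind

theorem Finset.prod_ite_lt_ite_eq {ι M : Type*} [CommMonoid M] [LinearOrder ι] [Fintype ι]
    [LocallyFiniteOrderBot ι] (f : ι → M) (b : M) (i : ι) :
    ∏ j, (if j < i then f j else if j = i then b else 1) = b * ∏ j ∈ Iio i, f j := by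
  rw [Finset.prod_ite, Finset.prod_ite_eq', Finset.filter_gt_eq_Iio, if_pos (by simp), mul_comm]

section

variable {n : ℕ} (σ : Equiv.Perm (Fin (n + 1))) {p : Fin (n + 1) → ℝ}

theorem apply_le_tailSum (hp : ∀ k, 0 ≤ p k) (i : Fin (n + 1)) : p (σ i) ≤ tailSum σ p i :=
  Finset.single_le_sum (f := fun j => p (σ j)) (fun j _ => hp (σ j)) (Finset.mem_Ici.2 le_rfl)

theorem threshold_nonneg (hp : ∀ k, 0 ≤ p k) (i : Fin (n + 1)) : 0 ≤ threshold σ p i := by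
  unfold threshold
  split_ifs with h
  exacts [div_nonneg (hp _) h.le, hp _]

theorem threshold_le_one (hp : ∀ k, 0 ≤ p k) (i : Fin (n + 1)) : threshold σ p i ≤ 1 := by
  have hle := apply_le_tailSum σ hp i
  unfold threshold
  split_ifs with h
  · exact (div_le_one h).2 hle
  · linarith [not_lt.1 h]

theorem act_eq_apply_find? (p : Fin (n + 1) → ℝ) (ω : Fin n → ℝ) :
    act σ p ω = σ (finSuccEquivLast.symm
      (Fin.find? fun i => decide (ω i < threshold σ p i.castSucc))) := by
  unfold act
  split <;> next hfind => simp only [hfind, finSuccEquivLast_symm_some, finSuccEquivLast_symm_none]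

end

def gapEvent {n : ℕ} (l u : Fin n → ℝ) (i : Fin n) : Set (Fin n → ℝ) :=
  {ω | (∀ j < i, u j ≤ ω j) ∧ ω i ∈ Set.Ico (l i) (u i)}

theorem setOf_act_ne_act_eq_iUnion_gapEvent {n : ℕ} (σ : Equiv.Perm (Fin (n + 1)))
    (p q : Fin (n + 1) → ℝ) :
    {ω | act σ p ω ≠ act σ q ω} =
      ⋃ i, gapEvent (fun j => min (threshold σ p j.castSucc) (threshold σ q j.castSucc))
        (fun j => max (threshold σ p j.castSucc) (threshold σ q j.castSucc)) i := by
  ext ω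
  change act σ p ω ≠ act σ q ω ↔ _
  rw [act_eq_apply_find?, act_eq_apply_find?, Ne, σ.injective.eq_iff,
    finSuccEquivLast.symm.injective.eq_iff, ← Ne, Fin.find?_ne_find?_iff, Set.mem_iUnion]
  simp only [gapEvent, Set.mem_ofPred_eq, decide_eq_false_iff_not, not_lt, max_le_iff, ne_eq,
    decide_eq_decide, not_lt_iff_lt_iff_mem_Ico]

section

variable {n : ℕ} {l u : Fin n → ℝ}

theorem gapEvent_eq_pi (i : Fin n) :
    gapEvent l u i = Set.univ.pi fun j =>
      if j < i then Set.Ici (u j) else if j = i then Set.Ico (l i) (u i) else Set.univ := by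
  ext ω
  simp only [gapEvent, Set.mem_ofPred_eq, Set.mem_pi, Set.mem_univ, true_implies]
  constructor
  · rintro ⟨hlt, hi⟩ j
    split_ifs with hj hj'
    exacts [hlt j hj, hj' ▸ hi, trivial]
  · intro h
    exact ⟨fun j hj => by simpa [hj] using h j, by simpa using h i⟩

theorem measurableSet_gapEvent (i : Fin n) : MeasurableSet (gapEvent l u i) := by
  rw [gapEvent_eq_pi]
  refine MeasurableSet.univ_pi fun j => ?_
  split_ifs
  exacts [measurableSet_Ici, measurableSet_Ico, MeasurableSet.univ]

theorem pairwise_disjoint_gapEvent : Pairwise (Function.onFun Disjoint (gapEvent l u)) := by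
  refine (pairwise_disjoint_on _).2 fun i i' hlt => Set.disjoint_left.2 ?_
  rintro ω ⟨-, -, hi⟩ ⟨hlt', -⟩
  exact (hlt' i hlt).not_gt hi

theorem unif_gapEvent (hl : ∀ j, 0 ≤ l j) (hlu : ∀ j, l j ≤ u j) (hu : ∀ j, u j ≤ 1)
    (i : Fin n) :
    unif n (gapEvent l u i) = ENNReal.ofReal ((u i - l i) * ∏ j ∈ Iio i, (1 - u j)) := by
  have hfactor : ∀ j, volume.restrict (Set.Ico (0 : ℝ) 1)
      (if j < i then Set.Ici (u j) else if j = i then Set.Ico (l i) (u i) else Set.univ) =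
      ENNReal.ofReal (if j < i then 1 - u j else if j = i then u i - l i else 1) := by
    intro j
    split_ifs
    · rw [Measure.restrict_apply measurableSet_Ici, ← Set.Ici_inter_Iio, ← Set.inter_assoc,
        Set.Ici_inter_Ici, max_eq_left ((hl j).trans (hlu j)), Set.Ici_inter_Iio, Real.volume_Ico]
    · simp [Measure.restrict_apply, Set.Ico_inter_Ico, hl i, hu i]
    · simp
  rw [gapEvent_eq_pi, unif, Measure.pi_pi, Finset.prod_congr rfl fun j _ => hfactor j,
    ← ENNReal.ofReal_prod_of_nonneg, Finset.prod_ite_lt_ite_eq]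
  intro j _
  split_ifs
  · exact sub_nonneg.2 (hu j)
  · exact sub_nonneg.2 (hlu i)
  · exact zero_le_one

end

theorem disagreement_prob_eq_general (n : ℕ) (σ : Equiv.Perm (Fin (n + 1)))
    (p q : Fin (n + 1) → ℝ)
    (hp : ∀ k, 0 ≤ p k)
    (hq : ∀ k, 0 ≤ q k) :
    unif n {ω | act σ p ω ≠ act σ q ω} =
      ENNReal.ofReal
        (∑ i : Fin n,
          (max (threshold σ p i.castSucc) (threshold σ q i.castSucc)
            - min (threshold σ p i.castSucc) (threshold σ q i.castSucc)) *
          ∏ j ∈ Finset.Iio i,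
            (1 - max (threshold σ p j.castSucc) (threshold σ q j.castSucc))) := by
  have hl : ∀ j : Fin n, 0 ≤ min (threshold σ p j.castSucc) (threshold σ q j.castSucc) :=
    fun j => le_min (threshold_nonneg σ hp _) (threshold_nonneg σ hq _)
  have hu : ∀ j : Fin n, max (threshold σ p j.castSucc) (threshold σ q j.castSucc) ≤ 1 :=
    fun j => max_le (threshold_le_one σ hp _) (threshold_le_one σ hq _)
  have hlu : ∀ j : Fin n,
      min (threshold σ p j.castSucc) (threshold σ q j.castSucc) ≤
        max (threshold σ p j.castSucc) (threshold σ q j.castSucc) := fun _ => min_le_max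
  rw [setOf_act_ne_act_eq_iUnion_gapEvent,
    measure_iUnion pairwise_disjoint_gapEvent measurableSet_gapEvent, tsum_fintype,
    ENNReal.ofReal_sum_of_nonneg fun i _ =>
      mul_nonneg (sub_nonneg.2 (hlu i)) (prod_nonneg fun j _ => sub_nonneg.2 (hu j))]
  exact Finset.sum_congr rfl fun i _ => unif_gapEvent hl hlu hu i

/-- Exact formula for the disagreement probability:
`Pr(a(p,ω) ≠ a(q,ω)) = ∑_{i=1}^{N-1} (u_i − l_i) · ∏_{j<i} (1 − u_j)`,
where `u_i = max(α_i(p), α_i(q))` and `l_i = min(α_i(p), α_i(q))`. -/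
theorem disagreement_prob_eq (n : ℕ) (σ : Equiv.Perm (Fin (n + 1)))
    (p q : Fin (n + 1) → ℝ)
    (hp : ∀ k, 0 ≤ p k) (hpsum : ∑ k, p k = 1)
    (hq : ∀ k, 0 ≤ q k) (hqsum : ∑ k, q k = 1) :
    unif n {ω | act σ p ω ≠ act σ q ω} =
      ENNReal.ofReal
        (∑ i : Fin n,
          (max (threshold σ p i.castSucc) (threshold σ q i.castSucc)
            - min (threshold σ p i.castSucc) (threshold σ q i.castSucc)) *
          ∏ j ∈ Finset.Iio i,
            (1 - max (threshold σ p j.castSucc) (threshold σ q j.castSucc))) :=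
  disagreement_prob_eq_general n σ p q hp hq
end
end
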